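/- arXiv:2408.13874 — 2 statements merged into one kernel-verified Lean document; each statement's English description precedes it below -/
import Mathlib

section
/- For all integers m ≥ 1, n ≥ 1 and 0 ≤ k ≤ n−1, the number of colored set partitions of type (m,n) with exactly km+1 blocks whose zero block has exactly m+1 elements equals n·h_{n−k−1}(m, 2m, …, km). -/
open Finset

/-- Complete homogeneous symmetric polynomial evaluated at a list of ring elements. -/
def hpoly {R : Type*} [CommSemiring R] : ℕ → List R → R
  | 0, _ => 1
  | _ + 1, [] => 0
  | j + 1, a :: l => hpoly (j + 1) l + a * hpoly j (a :: l)
  termination_by j l => (j, l.length)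

/-- The colored ground set `X_{m,n} = {0} ⊔ ({1,…,n} × ℤ/mℤ)`, with `none` as basepoint. -/
abbrev ColoredSet (m n : ℕ) := Option (Fin n × ZMod m)

/-- The action of `c ∈ ℤ/mℤ` on `X_{m,n}`: fixes the basepoint and shifts colors. -/
def shift {m n : ℕ} (c : ZMod m) : ColoredSet m n → ColoredSet m n :=
  Option.map fun p => (p.1, p.2 + c)

/-- A setoid on `X_{m,n}` is a colored set partition of type `(m,n)` if the `ℤ/mℤ`-action
maps blocks to blocks and the induced action on the blocks not containing the basepoint
is free. -/
def IsColored {m n : ℕ} (σ : Setoid (ColoredSet m n)) : Prop :=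
  (∀ (c : ZMod m) (x y : ColoredSet m n), σ.r x y → σ.r (shift c x) (shift c y)) ∧
  (∀ (c : ZMod m) (x : ColoredSet m n), ¬ σ.r x none → σ.r (shift c x) x → c = 0)

/-!
The zero block is invariant under the shift and has `m + 1` elements, so it is
`{0} ∪ ({z} × ℤ/mℤ)` for a unique column `z`; deleting it leaves a free colored partition of
the remaining `n - 1` columns into `k` orbits of blocks, and conversely.

Let `c(N, k)` count the free colored partitions of `N` columns into `k m` blocks. When a column
is added, either it forms a new orbit of `m` singleton blocks, or its element of color `0` joins
one of the `(k + 1) m` existing blocks, which by equivariance determines where the whole column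
goes. Hence `c(N + 1, k + 1) = c(N, k) + (k + 1) m · c(N, k + 1)`, the recurrence satisfied by
`h_{N-k}(m, 2m, …, km)` when the variable `(k + 1) m` is appended.
-/

theorem hpoly_succ_append_singleton {R : Type*} [CommSemiring R] (a : R) (l : List R) (j : ℕ) :
    hpoly (j + 1) (l ++ [a]) = hpoly (j + 1) l + a * hpoly j (l ++ [a]) := by
  induction l generalizing j with
  | nil => simp [hpoly.eq_3, hpoly.eq_2]
  | cons b l ihl =>
    induction j with
    | zero => simp only [List.cons_append, hpoly.eq_3, hpoly.eq_1, ihl]; ring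
    | succ j ihj =>
      simp only [List.cons_append] at ihj ⊢
      rw [hpoly.eq_3 (j + 1) b (l ++ [a]), hpoly.eq_3 (j + 1) b l, ihl]
      nth_rw 1 [ihj]
      rw [hpoly.eq_3 j b (l ++ [a])]
      ring

instance Setoid.finite {α : Type*} [Finite α] : Finite (Setoid α) :=
  Finite.of_injective (fun σ : Setoid α => (σ : α → α → Prop)) fun _ _ h =>
    Setoid.ext (by simp [h])

theorem Setoid.ker_eq_of_comp_eq_mk {α β : Type*} {σ : Setoid α} {g : α → β}
    {φ : β → Quotient σ} (hφ : Function.Injective φ) (h : ∀ x, φ (g x) = ⟦x⟧) :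
    Setoid.ker g = σ :=
  Setoid.ext fun x y => by rw [Setoid.ker_def, ← hφ.eq_iff, h, h, Quotient.eq]

theorem Setoid.quotientMap_comap_injective {α β : Type*} (f : α → β) (σ : Setoid β) :
    Function.Injective (Quotient.map f (fun _ _ => id) : Quotient (σ.comap f) → Quotient σ) := by
  rintro ⟨x⟩ ⟨y⟩ (h : (⟦f x⟧ : Quotient σ) = ⟦f y⟧)
  have hxy : σ (f x) (f y) := Quotient.exact h
  exact Quotient.sound hxy

namespace ColoredSetPartition

section FreePartition

variable {m : ℕ} {S T : Type*}

/-- A colored set partition of the columns `S` without a zero block. -/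
def IsFree (σ : Setoid (S × ZMod m)) : Prop :=
  (∀ (c : ZMod m) (x y : S × ZMod m), σ x y → σ (x.1, x.2 + c) (y.1, y.2 + c)) ∧
  ∀ (c : ZMod m) (x : S × ZMod m), σ (x.1, x.2 + c) x → c = 0

variable (m S) in
abbrev FreePartition (j : ℕ) : Type _ :=
  {σ : Setoid (S × ZMod m) // IsFree σ ∧ Nat.card (Quotient σ) = j}

namespace IsFree

variable {σ : Setoid (S × ZMod m)}

def quotShift (hσ : IsFree σ) (c : ZMod m) : Quotient σ → Quotient σ :=
  Quotient.map (fun y => (y.1, y.2 + c)) (hσ.1 c)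

@[simp]
theorem quotShift_mk (hσ : IsFree σ) (c : ZMod m) (y : S × ZMod m) :
    hσ.quotShift c ⟦y⟧ = ⟦(y.1, y.2 + c)⟧ := rfl

theorem quotShift_zero (hσ : IsFree σ) (q : Quotient σ) : hσ.quotShift 0 q = q := by
  induction q using Quotient.ind; simp

theorem quotShift_quotShift (hσ : IsFree σ) (c d : ZMod m) (q : Quotient σ) :
    hσ.quotShift d (hσ.quotShift c q) = hσ.quotShift (c + d) q := by
  induction q using Quotient.ind; simp [add_assoc]

theorem eq_zero_of_quotShift_eq (hσ : IsFree σ) {c : ZMod m} {q : Quotient σ}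
    (h : hσ.quotShift c q = q) : c = 0 := by
  induction q using Quotient.ind
  exact hσ.2 c _ (Quotient.exact h)

theorem eq_of_rel (hσ : IsFree σ) {s : S} {c d : ZMod m} (h : σ (s, c) (s, d)) : c = d :=
  sub_eq_zero.mp (hσ.2 (c - d) (s, d) (by simpa using h))

theorem comap (hσ : IsFree σ) (f : T → S) : IsFree (σ.comap (Prod.map f id)) :=
  ⟨fun c x y => hσ.1 c (f x.1, x.2) (f y.1, y.2), fun c x => hσ.2 c (f x.1, x.2)⟩

end IsFree

theorem isFree_ker {Y : Type*} {g : S × ZMod m → Y} (act : ZMod m → Y → Y)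
    (hg : ∀ c x, g (x.1, x.2 + c) = act c (g x)) (hact : ∀ c x, act c (g x) = g x → c = 0) :
    IsFree (Setoid.ker g) :=
  ⟨fun c x y (h : g x = g y) => show g _ = g _ by rw [hg, hg, h],
    fun c x (h : g _ = g x) => hact c x (by rw [← hg, h])⟩

def FreePartition.congr {j : ℕ} (e : S ≃ T) : FreePartition m S j ≃ FreePartition m T j where
  toFun σ := ⟨σ.1.comap (Prod.map e.symm id), σ.2.1.comap _,
    (Nat.card_congr (Quotient.congr (e.symm.prodCongr (.refl _)) fun _ _ => .rfl)).trans σ.2.2⟩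
  invFun σ := ⟨σ.1.comap (Prod.map e id), σ.2.1.comap _,
    (Nat.card_congr (Quotient.congr (e.prodCongr (.refl _)) fun _ _ => .rfl)).trans σ.2.2⟩
  left_inv σ := Subtype.ext (Setoid.ext fun _ _ => by
    simp only [Setoid.comap_rel, Prod.map, Equiv.symm_apply_apply, id])
  right_inv σ := Subtype.ext (Setoid.ext fun _ _ => by
    simp only [Setoid.comap_rel, Prod.map, Equiv.apply_symm_apply, id])

end FreePartition

section AddColumn

variable {m : ℕ} {S : Type*}

def restrict (σ : Setoid (Option S × ZMod m)) : Setoid (S × ZMod m) :=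
  σ.comap fun y => (some y.1, y.2)

theorem IsFree.restrict {σ : Setoid (Option S × ZMod m)} (hσ : IsFree σ) :
    IsFree (restrict σ) :=
  ⟨fun c x y h => hσ.1 c (some x.1, x.2) (some y.1, y.2) h,
    fun c x h => hσ.2 c (some x.1, x.2) h⟩

/- The two ways of extending `σ` to the new column `none × ℤ/mℤ`: as a new orbit of singleton
blocks, or by putting `(none, 0)` into the block `q` (and hence `(none, c)` into its shift). -/

def extendNewOrbit (σ : Setoid (S × ZMod m)) : Setoid (Option S × ZMod m) :=
  Setoid.ker fun x => x.1.elim (Sum.inr x.2) fun s => Sum.inl (⟦(s, x.2)⟧ : Quotient σ)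

def extendJoin {σ : Setoid (S × ZMod m)} (hσ : IsFree σ) (q : Quotient σ) :
    Setoid (Option S × ZMod m) :=
  Setoid.ker fun x => x.1.elim (hσ.quotShift x.2 q) fun s => ⟦(s, x.2)⟧

section

variable {σ : Setoid (S × ZMod m)}

theorem restrict_extendNewOrbit : restrict (extendNewOrbit σ) = σ :=
  Setoid.ext fun _ _ => Sum.inl_injective.eq_iff.trans Quotient.eq

theorem restrict_extendJoin (hσ : IsFree σ) (q : Quotient σ) :
    restrict (extendJoin hσ q) = σ :=
  Setoid.ker_mk_eq σ

theorem IsFree.extendNewOrbit (hσ : IsFree σ) : IsFree (extendNewOrbit σ) := by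
  refine isFree_ker (fun c => Sum.map (hσ.quotShift c) (· + c)) ?_ ?_
  · rintro c ⟨_ | s, d⟩ <;> rfl
  · rintro c ⟨_ | s, d⟩ h
    · simpa using h
    · exact hσ.eq_zero_of_quotShift_eq (Sum.inl_injective h)

theorem IsFree.extendJoin (hσ : IsFree σ) (q : Quotient σ) : IsFree (extendJoin hσ q) := by
  refine isFree_ker hσ.quotShift ?_ fun c _ => hσ.eq_zero_of_quotShift_eq
  rintro c ⟨_ | s, d⟩
  · exact (hσ.quotShift_quotShift d c q).symm
  · rfl

theorem card_quotient_extendNewOrbit [Finite S] [NeZero m] :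
    Nat.card (Quotient (extendNewOrbit σ)) = Nat.card (Quotient σ) + m := by
  rw [extendNewOrbit, Nat.card_congr (Setoid.quotientKerEquivOfSurjective _ ?_), Nat.card_sum,
    Nat.card_zmod]
  rintro (q | c)
  · induction q using Quotient.ind with | _ y => exact ⟨(some y.1, y.2), rfl⟩
  · exact ⟨(none, c), rfl⟩

theorem card_quotient_extendJoin (hσ : IsFree σ) (q : Quotient σ) :
    Nat.card (Quotient (extendJoin hσ q)) = Nat.card (Quotient σ) := by
  refine Nat.card_congr (Setoid.quotientKerEquivOfSurjective _ fun q' => ?_)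
  induction q' using Quotient.ind with | _ y => exact ⟨(some y.1, y.2), rfl⟩

theorem extendJoin_rel_none_zero (hσ : IsFree σ) (q : Quotient σ) (y : S × ZMod m) :
    extendJoin hσ q (none, 0) (some y.1, y.2) ↔ q = ⟦y⟧ := by
  rw [extendJoin, Setoid.ker_def]
  simp [hσ.quotShift_zero]

theorem not_extendNewOrbit_rel_none_zero (y : S × ZMod m) :
    ¬ extendNewOrbit σ (none, 0) (some y.1, y.2) := by
  rw [extendNewOrbit, Setoid.ker_def]
  simp

end

section

variable {σ : Setoid (Option S × ZMod m)}

theorem eq_extendJoin (hσ : IsFree σ) {y : S × ZMod m} (hy : σ (none, 0) (some y.1, y.2)) :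
    σ = extendJoin hσ.restrict ⟦y⟧ := by
  refine (Setoid.ker_eq_of_comp_eq_mk
    (Setoid.quotientMap_comap_injective (fun y : S × ZMod m => (some y.1, y.2)) σ) ?_).symm
  rintro ⟨_ | s, c⟩
  · exact Quotient.sound (σ.symm (by simpa using hσ.1 c _ _ hy))
  · rfl

theorem eq_extendNewOrbit (hσ : IsFree σ)
    (hσ₀ : ∀ y : S × ZMod m, ¬ σ (none, 0) (some y.1, y.2)) :
    σ = extendNewOrbit (restrict σ) := by
  have hinj : Function.Injective (Sum.elim
      (Quotient.map _ fun _ _ => id : Quotient (restrict σ) → Quotient σ)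
      fun c : ZMod m => (⟦(none, c)⟧ : Quotient σ)) := by
    refine (Setoid.quotientMap_comap_injective _ σ).sumElim
      (fun c d h => hσ.eq_of_rel (Quotient.exact h)) ?_
    rintro ⟨y⟩ c h
    exact hσ₀ (y.1, y.2 - c)
      (by simpa [sub_eq_add_neg] using hσ.1 (-c) _ _ (σ.symm (Quotient.exact h)))
  refine (Setoid.ker_eq_of_comp_eq_mk hinj ?_).symm
  rintro ⟨_ | s, c⟩ <;> rfl

end

variable [Finite S] [NeZero m]

def extendToOption (k : ℕ) :
    FreePartition m S (k * m) ⊕ (Σ σ : FreePartition m S ((k + 1) * m), Quotient σ.1) →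
      FreePartition m (Option S) ((k + 1) * m)
  | .inl σ => ⟨extendNewOrbit σ.1, σ.2.1.extendNewOrbit, by
      rw [card_quotient_extendNewOrbit, σ.2.2, add_mul, one_mul]⟩
  | .inr ⟨σ, q⟩ => ⟨extendJoin σ.2.1 q, σ.2.1.extendJoin q, by
      rw [card_quotient_extendJoin, σ.2.2]⟩

theorem extendToOption_injective (k : ℕ) :
    Function.Injective (extendToOption (m := m) (S := S) k) := by
  rintro (σ | ⟨σ, q⟩) (τ | ⟨τ, q'⟩) h <;> replace h := congrArg Subtype.val h <;>
    simp only [extendToOption] at h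
  · congr
    exact Subtype.ext (by simpa [restrict_extendNewOrbit] using congrArg restrict h)
  · induction q' using Quotient.ind with | _ y => ?_
    refine absurd ?_ (not_extendNewOrbit_rel_none_zero (σ := σ.1) y)
    rw [h, extendJoin_rel_none_zero]
  · induction q using Quotient.ind with | _ y => ?_
    refine absurd ?_ (not_extendNewOrbit_rel_none_zero (σ := τ.1) y)
    rw [← h, extendJoin_rel_none_zero]
  · obtain rfl : σ = τ :=
      Subtype.ext (by simpa [restrict_extendJoin] using congrArg restrict h)
    induction q' using Quotient.ind with | _ y => ?_
    have hy := (extendJoin_rel_none_zero σ.2.1 ⟦y⟧ y).mpr rfl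
    rw [← h, extendJoin_rel_none_zero] at hy
    rw [hy]

theorem extendToOption_surjective (k : ℕ) :
    Function.Surjective (extendToOption (m := m) (S := S) k) := by
  rintro ⟨σ, hσ, hcard⟩
  by_cases hσ₀ : ∃ y : S × ZMod m, σ (none, 0) (some y.1, y.2)
  · obtain ⟨y, hy⟩ := hσ₀
    have hσ' := eq_extendJoin hσ hy
    refine ⟨.inr ⟨⟨restrict σ, hσ.restrict, ?_⟩, ⟦y⟧⟩, Subtype.ext hσ'.symm⟩
    rw [← card_quotient_extendJoin hσ.restrict ⟦y⟧, ← hσ', hcard]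
  · have hσ' := eq_extendNewOrbit hσ (not_exists.mp hσ₀)
    refine ⟨.inl ⟨restrict σ, hσ.restrict, ?_⟩, Subtype.ext hσ'.symm⟩
    have := card_quotient_extendNewOrbit (σ := restrict σ)
    rw [← hσ', hcard, add_mul, one_mul] at this
    omega

theorem card_freePartition_option (k : ℕ) :
    Nat.card (FreePartition m (Option S) ((k + 1) * m)) =
      Nat.card (FreePartition m S (k * m)) +
        Nat.card (FreePartition m S ((k + 1) * m)) * ((k + 1) * m) := by
  have := Fintype.ofFinite (FreePartition m S ((k + 1) * m))
  rw [← Nat.card_eq_of_bijective _ ⟨extendToOption_injective k, extendToOption_surjective k⟩,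
    Nat.card_sum, Nat.card_sigma, Finset.sum_congr rfl fun σ _ => σ.2.2, Finset.sum_const,
    Finset.card_univ, smul_eq_mul, Fintype.card_eq_nat_card]

end AddColumn

section Count

variable {m : ℕ} {S : Type*}

theorem card_freePartition_zero_of_isEmpty [IsEmpty S] : Nat.card (FreePartition m S 0) = 1 := by
  have : Subsingleton (Setoid (S × ZMod m)) := ⟨fun _ _ => Setoid.ext fun x => isEmptyElim x⟩
  refine Nat.card_eq_one_iff_unique.mpr ⟨inferInstance, ⟨⊥, ?_, ?_⟩⟩
  · exact ⟨fun _ x => isEmptyElim x, fun _ x => isEmptyElim x⟩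
  · exact Nat.card_of_isEmpty

variable [NeZero m]

theorem card_freePartition_zero_of_nonempty [Finite S] [Nonempty S] :
    Nat.card (FreePartition m S 0) = 0 := by
  refine Nat.card_eq_zero.mpr (.inl ⟨fun σ => ?_⟩)
  have : Nonempty (Quotient σ.1) := ⟨⟦(Classical.arbitrary S, 0)⟧⟩
  exact Nat.card_pos.ne' σ.2.2

theorem card_freePartition_of_card_lt [Finite S] {k : ℕ} (hk : Nat.card S < k) :
    Nat.card (FreePartition m S (k * m)) = 0 := by
  refine Nat.card_eq_zero.mpr (.inl ⟨fun σ => ?_⟩)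
  have hle := Nat.card_le_card_of_surjective _ (Quotient.mk_surjective (s := σ.1))
  rw [σ.2.2, Nat.card_prod, Nat.card_zmod] at hle
  exact absurd hle (not_le.mpr (Nat.mul_lt_mul_of_pos_right hk (NeZero.pos m)))

theorem card_freePartition_fin (N k : ℕ) (hk : k ≤ N) :
    Nat.card (FreePartition m (Fin N) (k * m)) =
      hpoly (N - k) ((List.range k).map fun j => (j + 1) * m) := by
  induction N generalizing k with
  | zero =>
    obtain rfl := Nat.le_zero.mp hk
    rw [zero_mul, card_freePartition_zero_of_isEmpty, hpoly.eq_1]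
  | succ N ih =>
    cases k with
    | zero =>
      rw [zero_mul, card_freePartition_zero_of_nonempty, List.range_zero, List.map_nil,
        Nat.sub_zero, hpoly.eq_2]
    | succ k =>
      rw [Nat.card_congr (FreePartition.congr (finSuccEquiv N)), card_freePartition_option,
        ih k (by omega), Nat.add_sub_add_right, List.range_succ, List.map_append,
        List.map_singleton]
      rcases (Nat.le_of_lt_succ hk).lt_or_eq with hkN | rfl
      · obtain ⟨j, hj⟩ : ∃ j, N - k = j + 1 := ⟨N - (k + 1), by omega⟩
        rw [ih (k + 1) hkN, hj, show N - (k + 1) = j by omega, hpoly_succ_append_singleton,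
          List.range_succ, List.map_append, List.map_singleton, mul_comm]
      · rw [card_freePartition_of_card_lt (by simp), Nat.sub_self, hpoly.eq_1, hpoly.eq_1,
          zero_mul, add_zero]

theorem card_freePartition [Finite S] {k : ℕ} (hk : k ≤ Nat.card S) :
    Nat.card (FreePartition m S (k * m)) =
      hpoly (Nat.card S - k) ((List.range k).map fun j => (j + 1) * m) := by
  rw [Nat.card_congr (FreePartition.congr (Finite.equivFin S)), card_freePartition_fin _ _ hk]

end Count

section ZeroColumn

variable {m n : ℕ}

def IsZeroColumn (σ : Setoid (ColoredSet m n)) (z : Fin n) : Prop :=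
  ∀ x, σ x none ↔ ∀ p ∈ x, p.1 = z

theorem card_column [NeZero m] (z : Fin n) :
    Nat.card {x : ColoredSet m n // ∀ p ∈ x, p.1 = z} = m + 1 := by
  refine (Nat.card_congr (β := Option (ZMod m)) ⟨fun x => x.1.map Prod.snd,
    fun o => ⟨o.map (z, ·), by cases o <;> simp⟩, ?_, ?_⟩).trans ?_
  · rintro ⟨_ | ⟨i, c⟩, h⟩
    · rfl
    · obtain rfl : i = z := h _ rfl
      rfl
  · rintro (_ | c) <;> rfl
  · rw [Finite.card_option, Nat.card_zmod]

namespace IsZeroColumn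

variable {σ : Setoid (ColoredSet m n)} {z : Fin n}

theorem unique (hz : IsZeroColumn σ z) {z' : Fin n} (hz' : IsZeroColumn σ z') : z = z' :=
  (hz' _).mp ((hz (some (z, 0))).mpr (by rintro _ ⟨⟩; rfl)) _ rfl

theorem card_zeroBlock [NeZero m] (hz : IsZeroColumn σ z) :
    Nat.card {x // σ x none} = m + 1 :=
  (Nat.card_congr (Equiv.subtypeEquivRight hz)).trans (card_column z)

end IsZeroColumn

theorem IsColored.exists_isZeroColumn [NeZero m] {σ : Setoid (ColoredSet m n)}
    (hσ : IsColored σ) (hcard : Nat.card {x // σ x none} = m + 1) :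
    ∃ z, IsZeroColumn σ z := by
  have : Nontrivial {x // σ x none} := by
    rw [← Finite.one_lt_card_iff_nontrivial, hcard]
    exact Nat.lt_add_of_pos_left (NeZero.pos m)
  obtain ⟨⟨_ | ⟨z, d⟩, hx⟩, hne⟩ := exists_ne (⟨none, σ.refl _⟩ : {x // σ x none})
  · exact absurd rfl hne
  have hsub : {x : ColoredSet m n | ∀ p ∈ x, p.1 = z} ⊆ {x | σ x none} := by
    rintro (_ | ⟨i, c⟩) h
    · exact σ.refl _
    · obtain rfl : i = z := h _ rfl
      simpa [shift] using hσ.1 (c - d) _ _ hx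
  have hle : Set.ncard {x | σ x none} ≤ Set.ncard {x : ColoredSet m n | ∀ p ∈ x, p.1 = z} :=
    (hcard.trans (card_column z).symm).le
  exact ⟨z, fun x => (Set.ext_iff.mp (Set.eq_of_subset_of_ncard_le hsub hle) x).symm⟩

def restrictColumn (σ : Setoid (ColoredSet m n)) (z : Fin n) :
    Setoid ({i // i ≠ z} × ZMod m) :=
  σ.comap fun a => some (a.1.1, a.2)

theorem IsColored.isFree_restrictColumn {σ : Setoid (ColoredSet m n)} {z : Fin n}
    (hσ : IsColored σ) (hz : IsZeroColumn σ z) : IsFree (restrictColumn σ z) :=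
  ⟨fun c _ _ h => hσ.1 c _ _ h,
    fun c a h => hσ.2 c (some (a.1.1, a.2)) (fun h₀ => a.1.2 ((hz _).mp h₀ _ rfl)) h⟩

def columnMap (z : Fin n) (σ : Setoid ({i // i ≠ z} × ZMod m)) :
    ColoredSet m n → Option (Quotient σ) :=
  fun x => x.bind fun p => if h : p.1 = z then none else some ⟦(⟨p.1, h⟩, p.2)⟧

def extendColumn (z : Fin n) (σ : Setoid ({i // i ≠ z} × ZMod m)) : Setoid (ColoredSet m n) :=
  Setoid.ker (columnMap z σ)

variable {z : Fin n} {σ : Setoid ({i // i ≠ z} × ZMod m)}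

theorem columnMap_some (a : {i // i ≠ z} × ZMod m) :
    columnMap z σ (some (a.1.1, a.2)) = some ⟦a⟧ := by
  simp [columnMap, a.1.2]

theorem columnMap_shift (hσ : IsFree σ) (c : ZMod m) (x : ColoredSet m n) :
    columnMap z σ (shift c x) = (columnMap z σ x).map (hσ.quotShift c) := by
  rcases x with _ | ⟨i, d⟩
  · rfl
  · by_cases h : i = z <;> simp [columnMap, shift, h]

theorem isZeroColumn_extendColumn : IsZeroColumn (extendColumn z σ) z := by
  rintro (_ | ⟨i, d⟩)
  · simp
  · show columnMap z σ _ = none ↔ _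
    by_cases h : i = z <;> simp [columnMap, h]

theorem IsFree.isColored_extendColumn (hσ : IsFree σ) : IsColored (extendColumn z σ) := by
  refine ⟨fun c x y (h : columnMap z σ x = _) => ?_, fun c x h₀ h => ?_⟩
  · exact show columnMap z σ _ = _ by rw [columnMap_shift hσ, columnMap_shift hσ, h]
  · obtain ⟨q, hq⟩ := Option.ne_none_iff_exists'.mp h₀
    replace h : columnMap z σ _ = _ := h
    rw [columnMap_shift hσ, hq, Option.map_some, Option.some_inj] at h
    exact hσ.eq_zero_of_quotShift_eq h

theorem card_quotient_extendColumn [NeZero m] :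
    Nat.card (Quotient (extendColumn z σ)) = Nat.card (Quotient σ) + 1 := by
  rw [extendColumn, Nat.card_congr (Setoid.quotientKerEquivOfSurjective _ ?_), Finite.card_option]
  rintro (_ | ⟨⟨a⟩⟩)
  · exact ⟨none, rfl⟩
  · exact ⟨_, columnMap_some a⟩

theorem restrictColumn_extendColumn : restrictColumn (extendColumn z σ) z = σ :=
  Setoid.ext fun a b => by
    show columnMap z σ _ = columnMap z σ _ ↔ _
    rw [columnMap_some, columnMap_some, Option.some_inj, Quotient.eq]

theorem IsZeroColumn.eq_extendColumn {σ : Setoid (ColoredSet m n)} (hz : IsZeroColumn σ z) :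
    σ = extendColumn z (restrictColumn σ z) := by
  have hinj : Function.Injective fun o : Option (Quotient (restrictColumn σ z)) =>
      o.elim (⟦none⟧ : Quotient σ) (Quotient.map _ fun _ _ => id) := by
    have hne (a : {i // i ≠ z} × ZMod m) : (⟦none⟧ : Quotient σ) ≠ ⟦some (a.1.1, a.2)⟧ :=
      fun h => a.1.2 ((hz _).mp (σ.symm (Quotient.exact h)) _ rfl)
    rintro (_ | ⟨⟨a⟩⟩) (_ | ⟨⟨b⟩⟩) h
    · rfl
    · exact absurd h (hne b)
    · exact absurd h.symm (hne a)
    · exact congrArg some (Setoid.quotientMap_comap_injective _ σ h)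
  refine (Setoid.ker_eq_of_comp_eq_mk hinj ?_).symm
  rintro (_ | ⟨i, c⟩)
  · rfl
  · by_cases h : i = z
    · subst h
      simpa [columnMap] using Quotient.sound (σ.symm ((hz _).mpr (by rintro _ ⟨⟩; rfl)))
    · simp only [columnMap, Option.bind_some, dif_neg h]
      rfl

theorem card_coloredPartition [NeZero m] (k : ℕ) :
    Nat.card {σ : Setoid (ColoredSet m n) //
        IsColored σ ∧ Nat.card (Quotient σ) = k * m + 1 ∧ Nat.card {x // σ x none} = m + 1} =
      ∑ z : Fin n, Nat.card (FreePartition m {i // i ≠ z} (k * m)) := by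
  let extend (p : Σ z : Fin n, FreePartition m {i // i ≠ z} (k * m)) :
      {σ : Setoid (ColoredSet m n) //
        IsColored σ ∧ Nat.card (Quotient σ) = k * m + 1 ∧ Nat.card {x // σ x none} = m + 1} :=
    ⟨extendColumn p.1 p.2.1, p.2.2.1.isColored_extendColumn,
      by rw [card_quotient_extendColumn, p.2.2.2], isZeroColumn_extendColumn.card_zeroBlock⟩
  refine (Nat.card_eq_of_bijective extend ⟨?_, ?_⟩).symm.trans Nat.card_sigma
  · rintro ⟨z, σ⟩ ⟨z', τ⟩ h
    replace h : extendColumn z σ.1 = extendColumn z' τ.1 := congrArg Subtype.val h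
    have hz' : IsZeroColumn (extendColumn z σ.1) z' := h ▸ isZeroColumn_extendColumn
    obtain rfl : z = z' := isZeroColumn_extendColumn.unique hz'
    have hστ := congrArg (restrictColumn · z) h
    simp only [restrictColumn_extendColumn] at hστ
    rw [Subtype.ext hστ]
  · rintro ⟨σ, hσ, hcard, hzero⟩
    obtain ⟨z, hz⟩ := IsColored.exists_isZeroColumn hσ hzero
    refine ⟨⟨z, restrictColumn σ z, IsColored.isFree_restrictColumn hσ hz, ?_⟩,
      Subtype.ext hz.eq_extendColumn.symm⟩
    have := card_quotient_extendColumn (σ := restrictColumn σ z)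
    rw [← hz.eq_extendColumn, hcard] at this
    omega

end ZeroColumn

end ColoredSetPartition

theorem stmt5_general (m n k : ℕ) (hm : 1 ≤ m) (hk : k ≤ n - 1) :
    Nat.card {σ : Setoid (ColoredSet m n) //
        IsColored σ ∧ Nat.card (Quotient σ) = k * m + 1 ∧
        Nat.card {x : ColoredSet m n // σ.r x none} = m + 1}
      = n * hpoly (n - k - 1) ((List.range k).map fun j => (j + 1) * m) := by
  have : NeZero m := ⟨by omega⟩
  have hcolumns (z : Fin n) : Nat.card {i // i ≠ z} = n - 1 := by
    rw [Nat.card_eq_fintype_card, Fintype.card_subtype_compl, Fintype.card_fin,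
      Fintype.card_subtype_eq]
  rw [ColoredSetPartition.card_coloredPartition, Finset.sum_congr rfl fun z _ => by
      rw [ColoredSetPartition.card_freePartition ((hcolumns z).symm ▸ hk), hcolumns z],
    Finset.sum_const, Finset.card_univ, Fintype.card_fin, smul_eq_mul, Nat.sub_right_comm]

/-- for `m ≥ 1`, `n ≥ 1` and `0 ≤ k ≤ n−1`, the number of colored set
partitions of type `(m,n)` with exactly `km+1` blocks whose zero block has exactly
`m+1` elements equals `n·h_{n−k−1}(m, 2m, …, km)`. -/
theorem stmt5 (m n k : ℕ) (hm : 1 ≤ m) (hn : 1 ≤ n) (hk : k ≤ n - 1) :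
    Nat.card {σ : Setoid (ColoredSet m n) //
        IsColored σ ∧ Nat.card (Quotient σ) = k * m + 1 ∧
        Nat.card {x : ColoredSet m n // σ.r x none} = m + 1}
      = n * hpoly (n - k - 1) ((List.range k).map fun j => (j + 1) * m) :=
  stmt5_general m n k hm hk
end

section
/- For all integers m ≥ 1 and n ≥ 0, the following identity holds in ℤ[q]: Σ_{k=0}^{n} (−q^{m−1})^{n−k} · (Π_{j=1}^{k} [jm]_q) · h_{n−k}([1]_q, [m+1]_q, …, [km+1]_q) = ([m−1]_q)^n. (The k-th summand is (−q^{m−1})^{n−k} times the Chan–Rhoades ordered q-Stirling number S^o_CR[m,n,k] = [km]!_m · h_{n−k}([1]_q,…,[km+1]_q).) -/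
/-!
Put `t = -q^{m-1}`, `a k = [km+1]_q` and `b k = [(k+1)m]_q`, so that `t * a k + b k = [m-1]_q`
for every `k`. The numbers `S(k, i) = (∏_{j<k} b j) · h_i(a 0, …, a k)` satisfy the Stirling-type
recurrence `S(k, i+1) = b (k-1) · S(k-1, i+1) + a k · S(k, i)`, and for any sequences with
`t * a k + b k = c` this recurrence turns `∑_{k+i=n} t^i S(k, i)` into `c` times the same sum
for `n - 1`.
-/

open Finset

/-- The q-integer `[l]_q = 1 + q + … + q^{l-1}` in `ℤ[q]`. -/
noncomputable def qint (l : ℕ) : Polynomial ℤ := ∑ i ∈ range l, Polynomial.X ^ i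

section hpoly

variable {R : Type*} [CommSemiring R]

@[simp]
lemma hpoly_zero (l : List R) : hpoly 0 l = 1 := by
  simp [hpoly]

@[simp]
lemma hpoly_succ_nil (j : ℕ) : hpoly (j + 1) ([] : List R) = 0 := by
  simp [hpoly]

lemma hpoly_succ_cons (j : ℕ) (x : R) (l : List R) :
    hpoly (j + 1) (x :: l) = hpoly (j + 1) l + x * hpoly j (x :: l) := by
  rw [hpoly]

lemma hpoly_succ_concat (j : ℕ) (l : List R) (x : R) :
    hpoly (j + 1) (l ++ [x]) = hpoly (j + 1) l + x * hpoly j (l ++ [x]) := by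
  induction j generalizing l with
  | zero =>
    induction l with
    | nil => simp [hpoly_succ_cons]
    | cons y l ih => simp only [List.cons_append, hpoly_succ_cons, ih, hpoly_zero]; ring
  | succ j ihj =>
    induction l with
    | nil => simp [hpoly_succ_cons]
    | cons y l ih =>
      have h := ihj (y :: l)
      rw [List.cons_append] at h ⊢
      calc hpoly (j + 2) (y :: (l ++ [x]))
          = hpoly (j + 2) (l ++ [x]) + y * hpoly (j + 1) (y :: (l ++ [x])) :=
            hpoly_succ_cons _ _ _
        _ = hpoly (j + 2) l + x * hpoly (j + 1) (l ++ [x]) +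
              y * (hpoly (j + 1) (y :: l) + x * hpoly j (y :: (l ++ [x]))) := by rw [ih, h]
        _ = hpoly (j + 2) l + y * hpoly (j + 1) (y :: l) +
              x * (hpoly (j + 1) (l ++ [x]) + y * hpoly j (y :: (l ++ [x]))) := by ring
        _ = hpoly (j + 2) (y :: l) + x * hpoly (j + 1) (y :: (l ++ [x])) := by
            rw [hpoly_succ_cons (j + 1) y l, hpoly_succ_cons j y (l ++ [x])]

end hpoly

section Stirling

variable {R : Type*} [CommRing R] (a b : ℕ → R)

/-- `genStirling a b k i` is `S[k + i, k]`; for the sequences of `stmt9` it is the ordered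
q-Stirling number `S^o_CR[m, k + i, k]`. -/
def genStirling (k i : ℕ) : R :=
  (∏ j ∈ range k, b j) * hpoly i ((List.range (k + 1)).map a)

lemma genStirling_succ_right (k i : ℕ) :
    genStirling a b k (i + 1) =
      (∏ j ∈ range k, b j) * hpoly (i + 1) ((List.range k).map a) + a k * genStirling a b k i := by
  rw [genStirling, genStirling, List.range_succ, List.map_append, List.map_singleton,
    hpoly_succ_concat]
  ring

theorem sum_antidiagonal_pow_mul_genStirling (t c : R) (hc : ∀ k, t * a k + b k = c) (n : ℕ) :
    ∑ p ∈ antidiagonal n, t ^ p.2 * genStirling a b p.1 p.2 = c ^ n := by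
  induction n with
  | zero => simp [genStirling]
  | succ n ih =>
    have h_peel : ∑ p ∈ antidiagonal (n + 1), t ^ p.2 * genStirling a b p.1 p.2 =
        ∑ p ∈ antidiagonal (n + 1),
            t ^ p.2 * ((∏ j ∈ range p.1, b j) * hpoly p.2 ((List.range p.1).map a)) +
          ∑ p ∈ antidiagonal n, t * a p.1 * (t ^ p.2 * genStirling a b p.1 p.2) := by
      rw [Nat.sum_antidiagonal_succ', Nat.sum_antidiagonal_succ', add_assoc, ← sum_add_distrib]
      congr 1
      · simp only [genStirling, hpoly_zero]
      · refine sum_congr rfl fun p _ => ?_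
        rw [genStirling_succ_right]
        ring
    have h_shift : ∑ p ∈ antidiagonal (n + 1),
          t ^ p.2 * ((∏ j ∈ range p.1, b j) * hpoly p.2 ((List.range p.1).map a)) =
        ∑ p ∈ antidiagonal n, b p.1 * (t ^ p.2 * genStirling a b p.1 p.2) := by
      rw [Nat.sum_antidiagonal_succ]
      simp only [range_zero, prod_empty, List.range_zero, List.map_nil, hpoly_succ_nil, mul_zero,
        zero_add]
      refine sum_congr rfl fun p _ => ?_
      rw [genStirling, prod_range_succ]
      ring
    rw [h_peel, h_shift, ← sum_add_distrib, pow_succ', ← ih, mul_sum]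
    refine sum_congr rfl fun p _ => ?_
    rw [← hc p.1]
    ring

end Stirling

lemma qint_add (x y : ℕ) : qint (x + y) = qint x + Polynomial.X ^ x * qint y := by
  simp [qint, sum_range_add, pow_add, mul_sum]

lemma neg_X_pow_mul_qint_add_qint {m : ℕ} (hm : 1 ≤ m) (k : ℕ) :
    -Polynomial.X ^ (m - 1) * qint (k * m + 1) + qint ((k + 1) * m) = qint (m - 1) := by
  obtain ⟨m, rfl⟩ := Nat.exists_eq_add_of_le' hm
  rw [show (k + 1) * (m + 1) = m + (k * (m + 1) + 1) by ring, qint_add m]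
  simp only [Nat.add_sub_cancel]
  ring

/-- in `ℤ[q]`,
`Σ_{k=0}^{n} (−q^{m−1})^{n−k} · (Π_{j=1}^{k} [jm]_q) · h_{n−k}([1]_q, [m+1]_q, …, [km+1]_q)
  = ([m−1]_q)^n`,
i.e. the alternating sum of the Chan–Rhoades ordered q-Stirling numbers `S^o_CR[m,n,k]`
is `[m−1]^n`. -/
theorem stmt9 (m n : ℕ) (hm : 1 ≤ m) :
    ∑ k ∈ range (n + 1),
        (-(Polynomial.X : Polynomial ℤ) ^ (m - 1)) ^ (n - k) *
          ((∏ j ∈ range k, qint ((j + 1) * m)) *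
            hpoly (n - k) ((List.range (k + 1)).map fun j => qint (j * m + 1)))
      = qint (m - 1) ^ n := by
  rw [← sum_antidiagonal_pow_mul_genStirling (fun j => qint (j * m + 1))
    (fun j => qint ((j + 1) * m)) _ _ (neg_X_pow_mul_qint_add_qint hm) n,
    Nat.sum_antidiagonal_eq_sum_range_succ (fun k i => _ ^ i * genStirling _ _ k i)]
  rfl
end
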